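/- Let Z ⊆ ℝ^q, W ⊆ ℝ^p be basic ellitopes given by Z = {z : ∃ s ∈ S, zᵀS_ℓ z ≤ s_ℓ, ℓ ≤ L} and W = {w : ∃ t ∈ T, wᵀT_k w ≤ t_k, k ≤ K}, let X = PW and B_* = QZ have nonempty interiors, and let B be the polar of B_*. Define Opt(A) = min over λ ≥ 0, υ ≥ 0 of φ_T(λ) + φ_S(υ) subject to the block matrix [[∑_ℓ υ_ℓ S_ℓ, QᵀAP/2],[PᵀAᵀQ/2, ∑_k λ_k T_k]] ⪰ 0. Then ‖A‖_{B,X} ≤ Opt(A), and if K = L = 1 then Opt(A) = ‖A‖_{B,X}. -/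

import Mathlib

/-!
Testing the semidefinite constraint of a feasible `(λ, υ)` on the vector `(z, -w)` gives
`zᵀMw ≤ ∑ υ_ℓ zᵀS_ℓz + ∑ λ_k wᵀT_kw` with `M = QᵀAP`, and for `z ∈ Z`, `w ∈ W` the right-hand side
is at most `φ_S(υ) + φ_T(λ)`; as `yᵀAx = zᵀMw` for `y = Qz`, `x = Pw`, this is `‖A‖_{B,X} ≤ Opt(A)`.
(Feasible points exist because a positive definite matrix dominates any symmetric one once scaled.)

When `K = L = 1`, `Z` and `W` are the ellipsoids `zᵀSz ≤ σ`, `wᵀTw ≤ τ` with `σ = max S` and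
`τ = max T`. Rescaling `z`, `w` onto their boundaries and AM-GM turn `zᵀMw ≤ N := ‖A‖_{B,X}` on
them into `|zᵀMw| ≤ N (zᵀSz / σ + wᵀTw / τ) / 2` everywhere, so `(λ, υ) = (N / 2τ, N / 2σ)` is
feasible, with value `N`.
-/

open Matrix Set

namespace Matrix

theorem isHermitian_fromBlocks_half {m n : Type*} {A : Matrix m m ℝ} {D : Matrix n n ℝ}
    (hA : A.IsHermitian) (hD : D.IsHermitian) (B : Matrix m n ℝ) :
    (fromBlocks A ((1 / 2 : ℝ) • B) ((1 / 2 : ℝ) • Bᵀ) D).IsHermitian :=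
  isHermitian_fromBlocks_iff.2 ⟨hA, by simp [conjTranspose_eq_transpose_of_trivial],
    by simp [conjTranspose_eq_transpose_of_trivial], hD⟩

variable {m n : Type*} [Fintype m] [Fintype n]

theorem smul_dotProduct_mulVec_smul (S : Matrix n n ℝ) (c : ℝ) (v : n → ℝ) :
    (c • v) ⬝ᵥ S *ᵥ (c • v) = c ^ 2 * (v ⬝ᵥ S *ᵥ v) := by
  simp only [smul_dotProduct, mulVec_smul, dotProduct_smul, smul_eq_mul]
  ring

theorem dotProduct_sum_smul_mulVec {ι : Type*} [Fintype ι] (S : ι → Matrix n n ℝ) (u : ι → ℝ)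
    (v : n → ℝ) : v ⬝ᵥ (∑ i, u i • S i) *ᵥ v = ∑ i, u i * (v ⬝ᵥ S i *ᵥ v) := by
  simp [sum_mulVec, dotProduct_sum, smul_mulVec, dotProduct_smul]

theorem mulVec_dotProduct_mulVec_mulVec {k l : Type*} [Fintype k] [Fintype l]
    (Q : Matrix k m ℝ) (A : Matrix k l ℝ) (P : Matrix l n ℝ) (z : m → ℝ) (w : n → ℝ) :
    Q *ᵥ z ⬝ᵥ A *ᵥ (P *ᵥ w) = z ⬝ᵥ (Qᵀ * A * P) *ᵥ w := by
  rw [dotProduct_comm, ← dotProduct_transpose_mulVec, Matrix.mul_assoc, ← mulVec_mulVec,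
    ← mulVec_mulVec]

theorem setOf_image_dotProduct_mulVec_image {k l : Type*} [Fintype k] [Fintype l]
    (Q : Matrix k m ℝ) (A : Matrix k l ℝ) (P : Matrix l n ℝ) (Z : Set (m → ℝ))
    (W : Set (n → ℝ)) :
    {r | ∃ y ∈ (fun z => Q *ᵥ z) '' Z, ∃ x ∈ (fun w => P *ᵥ w) '' W, r = y ⬝ᵥ A *ᵥ x} =
      image2 (fun z w => z ⬝ᵥ (Qᵀ * A * P) *ᵥ w) Z W := by
  ext r
  simp only [Set.mem_ofPred_eq, exists_mem_image, mulVec_dotProduct_mulVec_mulVec, mem_image2,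
    eq_comm]

theorem sumElim_dotProduct_fromBlocks_mulVec (A : Matrix m m ℝ) (B : Matrix m n ℝ)
    (C : Matrix n m ℝ) (D : Matrix n n ℝ) (z : m → ℝ) (w : n → ℝ) :
    Sum.elim z w ⬝ᵥ fromBlocks A B C D *ᵥ Sum.elim z w
      = z ⬝ᵥ A *ᵥ z + z ⬝ᵥ B *ᵥ w + w ⬝ᵥ C *ᵥ z + w ⬝ᵥ D *ᵥ w := by
  simp only [fromBlocks_mulVec, sumElim_dotProduct_sumElim, dotProduct_add, Sum.elim_comp_inl,
    Sum.elim_comp_inr]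
  ring

theorem posSemidef_fromBlocks_half_iff {A : Matrix m m ℝ} {D : Matrix n n ℝ}
    (hA : A.IsHermitian) (hD : D.IsHermitian) (B : Matrix m n ℝ) :
    (fromBlocks A ((1 / 2 : ℝ) • B) ((1 / 2 : ℝ) • Bᵀ) D).PosSemidef ↔
      ∀ z w, 0 ≤ z ⬝ᵥ A *ᵥ z + z ⬝ᵥ B *ᵥ w + w ⬝ᵥ D *ᵥ w := by
  have hquad : ∀ z w, Sum.elim z w ⬝ᵥ fromBlocks A ((1 / 2 : ℝ) • B) ((1 / 2 : ℝ) • Bᵀ) D *ᵥ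
      Sum.elim z w = z ⬝ᵥ A *ᵥ z + z ⬝ᵥ B *ᵥ w + w ⬝ᵥ D *ᵥ w := by
    intro z w
    rw [sumElim_dotProduct_fromBlocks_mulVec, smul_mulVec, smul_mulVec, dotProduct_smul,
      dotProduct_smul, dotProduct_transpose_mulVec, smul_eq_mul]
    ring
  simp only [posSemidef_iff_dotProduct_mulVec, star_trivial, isHermitian_fromBlocks_half hA hD,
    true_and]
  refine ⟨fun h z w => hquad z w ▸ h _, fun h x => ?_⟩
  rw [← Sum.elim_comp_inl_inr x, hquad]
  exact h _ _

theorem PosDef.fromBlocks_zero {A : Matrix m m ℝ} {D : Matrix n n ℝ} (hA : A.PosDef)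
    (hD : D.PosDef) : (fromBlocks A 0 0 D).PosDef := by
  classical
  have := hA.isUnit.invertible
  have hpsd : (fromBlocks A 0 0 D).PosSemidef := by
    simpa using (PosDef.fromBlocks₁₁ 0 D hA).2 (by simpa using hD.posSemidef)
  exact hpsd.posDef_iff_det_ne_zero.2 <| by
    rw [det_fromBlocks_zero₂₁]
    exact mul_ne_zero hA.det_pos.ne' hD.det_pos.ne'

theorem PosDef.exists_posSemidef_smul_add {G H : Matrix n n ℝ} (hG : G.PosDef)
    (hH : H.IsHermitian) : ∃ c : ℝ, 0 ≤ c ∧ (c • G + H).PosSemidef := by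
  suffices ∃ c : ℝ, 0 ≤ c ∧ ∀ v, 0 ≤ c * (v ⬝ᵥ G *ᵥ v) + v ⬝ᵥ H *ᵥ v by
    obtain ⟨c, hc, h⟩ := this
    have hherm := (hG.isHermitian.smul (IsSelfAdjoint.all c)).add hH
    refine ⟨c, hc, .of_dotProduct_mulVec_nonneg hherm fun v => ?_⟩
    simpa [add_mulVec, smul_mulVec, dotProduct_add] using h v
  rcases isEmpty_or_nonempty n with hn | hn
  · exact ⟨0, le_rfl, fun v => by simp [Subsingleton.elim v 0]⟩
  have hcpt : IsCompact (Metric.sphere (0 : n → ℝ) 1) := isCompact_sphere 0 1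
  have hne : (Metric.sphere (0 : n → ℝ) 1).Nonempty := NormedSpace.sphere_nonempty.2 zero_le_one
  obtain ⟨u₀, hu₀, hGmin⟩ := hcpt.exists_isMinOn hne
    (show Continuous fun v : n → ℝ => v ⬝ᵥ G *ᵥ v by fun_prop).continuousOn
  obtain ⟨u₁, hu₁, hHmin⟩ := hcpt.exists_isMinOn hne
    (show Continuous fun v : n → ℝ => v ⬝ᵥ H *ᵥ v by fun_prop).continuousOn
  have hδ : 0 < u₀ ⬝ᵥ G *ᵥ u₀ := by
    simpa using hG.dotProduct_mulVec_pos (ne_zero_of_mem_unit_sphere ⟨u₀, hu₀⟩)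
  set c := max 0 (-(u₁ ⬝ᵥ H *ᵥ u₁) / (u₀ ⬝ᵥ G *ᵥ u₀))
  have hunit : ∀ u ∈ Metric.sphere (0 : n → ℝ) 1, 0 ≤ c * (u ⬝ᵥ G *ᵥ u) + u ⬝ᵥ H *ᵥ u := by
    intro u hu
    have hc : -(u₁ ⬝ᵥ H *ᵥ u₁) ≤ c * (u₀ ⬝ᵥ G *ᵥ u₀) :=
      (div_le_iff₀ hδ).1 (le_max_right _ _)
    have := mul_le_mul_of_nonneg_left (isMinOn_iff.1 hGmin u hu) (le_max_left _ _ : 0 ≤ c)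
    linarith [show u₁ ⬝ᵥ H *ᵥ u₁ ≤ u ⬝ᵥ H *ᵥ u from isMinOn_iff.1 hHmin u hu]
  refine ⟨c, le_max_left _ _, fun v => ?_⟩
  obtain rfl | hv := eq_or_ne v 0
  · simp
  have hr : 0 < ‖v‖⁻¹ ^ 2 := by positivity
  have := hunit (‖v‖⁻¹ • v) (by simp [norm_smul, hv])
  rw [smul_dotProduct_mulVec_smul, smul_dotProduct_mulVec_smul, mul_left_comm, ← mul_add] at this
  exact (mul_nonneg_iff_of_pos_left hr).1 this

theorem PosDef.dotProduct_mulVec_le_of_forall_le {S : Matrix m m ℝ} {T : Matrix n n ℝ}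
    (hS : S.PosDef) (hT : T.PosDef) (M : Matrix m n ℝ) {σ τ N : ℝ} (hσ : 0 < σ) (hτ : 0 < τ)
    (h : ∀ z w, z ⬝ᵥ S *ᵥ z ≤ σ → w ⬝ᵥ T *ᵥ w ≤ τ → z ⬝ᵥ M *ᵥ w ≤ N) (z : m → ℝ) (w : n → ℝ) :
    z ⬝ᵥ M *ᵥ w ≤ N / (2 * σ) * (z ⬝ᵥ S *ᵥ z) + N / (2 * τ) * (w ⬝ᵥ T *ᵥ w) := by
  have hN : 0 ≤ N := by simpa using h 0 0 (by simpa using hσ.le) (by simpa using hτ.le)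
  have ha₀ := hS.posSemidef.dotProduct_mulVec_nonneg z
  have hb₀ := hT.posSemidef.dotProduct_mulVec_nonneg w
  simp only [star_trivial] at ha₀ hb₀
  obtain rfl | hz := eq_or_ne z 0
  · simp only [zero_dotProduct, mulVec_zero, dotProduct_zero, mul_zero, zero_add]
    positivity
  obtain rfl | hw := eq_or_ne w 0
  · simp only [mulVec_zero, dotProduct_zero, mul_zero, add_zero]
    positivity
  set a := z ⬝ᵥ S *ᵥ z
  set b := w ⬝ᵥ T *ᵥ w
  have ha : 0 < a := by simpa using hS.dotProduct_mulVec_pos hz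
  have hb : 0 < b := by simpa using hT.dotProduct_mulVec_pos hw
  -- rescale `z` and `w` onto the boundaries of the two ellipsoids
  set x := √(a / σ)
  set y := √(b / τ)
  have hx : 0 < x := Real.sqrt_pos.2 (by positivity)
  have hy : 0 < y := Real.sqrt_pos.2 (by positivity)
  have hx2 : x ^ 2 = a / σ := Real.sq_sqrt (by positivity)
  have hy2 : y ^ 2 = b / τ := Real.sq_sqrt (by positivity)
  have hz' : (x⁻¹ • z) ⬝ᵥ S *ᵥ (x⁻¹ • z) ≤ σ := by
    rw [smul_dotProduct_mulVec_smul, inv_pow, hx2]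
    field_simp; rfl
  have hw' : (y⁻¹ • w) ⬝ᵥ T *ᵥ (y⁻¹ • w) ≤ τ := by
    rw [smul_dotProduct_mulVec_smul, inv_pow, hy2]
    field_simp; rfl
  have hscaled := h _ _ hz' hw'
  simp only [smul_dotProduct, mulVec_smul, dotProduct_smul, smul_eq_mul] at hscaled
  calc z ⬝ᵥ M *ᵥ w = x * y * (y⁻¹ * (x⁻¹ * z ⬝ᵥ M *ᵥ w)) := by field_simp
    _ ≤ x * y * N := by gcongr
    _ ≤ N * ((x ^ 2 + y ^ 2) / 2) := by nlinarith [mul_nonneg hN (sq_nonneg (x - y))]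
    _ = N / (2 * σ) * a + N / (2 * τ) * b := by
        rw [hx2, hy2]; field_simp

end Matrix

section Ellitope

variable {ι κ m n : Type*} [Fintype m] [Fintype n]

def ellitope (S : ι → Matrix n n ℝ) (T : Set (ι → ℝ)) : Set (n → ℝ) :=
  {z | ∃ s ∈ T, ∀ ℓ, z ⬝ᵥ S ℓ *ᵥ z ≤ s ℓ}

/-- `φ_T(λ) = max_{t ∈ T} λᵀt`. -/
noncomputable def supportFun [Fintype ι] (T : Set (ι → ℝ)) (lam : ι → ℝ) : ℝ :=
  sSup {u | ∃ t ∈ T, u = ∑ k, lam k * t k}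

/-- The objective values `φ_T(λ) + φ_S(υ)` of the feasible points of the semidefinite program
defining `Opt(A)`, written with `M = QᵀAP`. -/
def sdpValues [Fintype ι] [Fintype κ] (S : ι → Matrix m m ℝ) (Sset : Set (ι → ℝ))
    (T : κ → Matrix n n ℝ) (Tset : Set (κ → ℝ)) (M : Matrix m n ℝ) : Set ℝ :=
  {r | ∃ (lam : κ → ℝ) (ups : ι → ℝ), (∀ k, 0 ≤ lam k) ∧ (∀ ℓ, 0 ≤ ups ℓ) ∧
    (fromBlocks (∑ ℓ, ups ℓ • S ℓ) ((1 / 2 : ℝ) • M) ((1 / 2 : ℝ) • Mᵀ)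
      (∑ k, lam k • T k)).PosSemidef ∧
    r = supportFun Tset lam + supportFun Sset ups}

theorem zero_mem_ellitope (S : ι → Matrix n n ℝ) {T : Set (ι → ℝ)} {t : ι → ℝ} (ht : t ∈ T)
    (h0 : ∀ k, 0 ≤ t k) : 0 ∈ ellitope S T :=
  ⟨t, ht, fun k => by simpa using h0 k⟩

theorem le_supportFun [Fintype ι] {T : Set (ι → ℝ)} (hT : IsCompact T) {t : ι → ℝ} (ht : t ∈ T)
    (lam : ι → ℝ) : ∑ k, lam k * t k ≤ supportFun T lam := by
  refine le_csSup ((hT.image (f := fun t => ∑ k, lam k * t k) (by fun_prop)).bddAbove.mono ?_)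
    ⟨t, ht, rfl⟩
  rintro _ ⟨t, ht, rfl⟩
  exact ⟨t, ht, rfl⟩

theorem supportFun_const_of_isMaxOn [Fintype ι] [Unique ι] {T : Set (ι → ℝ)} {c : ℝ} (hc : 0 ≤ c)
    {t : ι → ℝ} (ht : t ∈ T) (hmax : IsMaxOn (fun t => t default) T t) :
    supportFun T (fun _ => c) = c * t default := by
  refine IsGreatest.csSup_eq ⟨⟨t, ht, by simp⟩, ?_⟩
  rintro _ ⟨t', ht', rfl⟩
  simpa using mul_le_mul_of_nonneg_left (isMaxOn_iff.1 hmax t' ht') hc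

theorem exists_forall_pos_of_interior_nonempty [Fintype ι] {T : Set (ι → ℝ)}
    (hT : ∀ t ∈ T, ∀ k, 0 ≤ t k) (hint : (interior T).Nonempty) : ∃ t ∈ T, ∀ k, 0 < t k := by
  obtain ⟨t, ht⟩ := hint
  obtain ⟨ε, hε, hball⟩ := Metric.mem_nhds_iff.1 (mem_interior_iff_mem_nhds.1 ht)
  have hmem : (t + fun _ => ε / 2) ∈ T := hball <| (dist_pi_lt_iff hε).2 fun k => by
    rw [Real.dist_eq, Pi.add_apply, add_sub_cancel_left, abs_of_pos (half_pos hε)]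
    exact half_lt_self hε
  refine ⟨_, hmem, fun k => ?_⟩
  have := hT t (hball (Metric.mem_ball_self hε)) k
  rw [Pi.add_apply]
  linarith

theorem sdpValues_subset_upperBounds [Fintype ι] [Fintype κ] {S : ι → Matrix m m ℝ}
    {Sset : Set (ι → ℝ)} {T : κ → Matrix n n ℝ} {Tset : Set (κ → ℝ)} (hScomp : IsCompact Sset)
    (hTcomp : IsCompact Tset) (M : Matrix m n ℝ) :
    sdpValues S Sset T Tset M ⊆
      upperBounds (image2 (fun z w => z ⬝ᵥ M *ᵥ w) (ellitope S Sset) (ellitope T Tset)) := by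
  rintro _ ⟨lam, ups, hlam, hups, hpsd, rfl⟩ _ ⟨z, ⟨s, hs, hzs⟩, w, ⟨t, ht, hwt⟩, rfl⟩
  obtain ⟨hA, -, -, hD⟩ := isHermitian_fromBlocks_iff.1 hpsd.isHermitian
  have hq := (posSemidef_fromBlocks_half_iff hA hD M).1 hpsd z (-w)
  simp only [mulVec_neg, dotProduct_neg, neg_dotProduct, neg_neg, dotProduct_sum_smul_mulVec]
    at hq
  have hSle : ∑ ℓ, ups ℓ * (z ⬝ᵥ S ℓ *ᵥ z) ≤ ∑ ℓ, ups ℓ * s ℓ :=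
    Finset.sum_le_sum fun ℓ _ => mul_le_mul_of_nonneg_left (hzs ℓ) (hups ℓ)
  have hTle : ∑ k, lam k * (w ⬝ᵥ T k *ᵥ w) ≤ ∑ k, lam k * t k :=
    Finset.sum_le_sum fun k _ => mul_le_mul_of_nonneg_left (hwt k) (hlam k)
  linarith [le_supportFun hScomp hs ups, le_supportFun hTcomp ht lam]

theorem sdpValues_nonempty [Fintype ι] [Fintype κ] {S : ι → Matrix m m ℝ} (Sset : Set (ι → ℝ))
    {T : κ → Matrix n n ℝ} (Tset : Set (κ → ℝ)) (hS : (∑ ℓ, S ℓ).PosDef) (hT : (∑ k, T k).PosDef)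
    (M : Matrix m n ℝ) : (sdpValues S Sset T Tset M).Nonempty := by
  obtain ⟨c, hc, hpsd⟩ := (hS.fromBlocks_zero hT).exists_posSemidef_smul_add
    (isHermitian_fromBlocks_half isHermitian_zero isHermitian_zero M)
  refine ⟨_, fun _ => c, fun _ => c, fun _ => hc, fun _ => hc, ?_, rfl⟩
  simpa [fromBlocks_smul, fromBlocks_add, Finset.smul_sum] using hpsd

theorem sSup_image2_mem_sdpValues [Fintype ι] [Fintype κ] [Unique ι] [Unique κ]
    {S : ι → Matrix m m ℝ} {Sset : Set (ι → ℝ)} {T : κ → Matrix n n ℝ} {Tset : Set (κ → ℝ)}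
    (hS : (S default).PosDef) (hT : (T default).PosDef)
    (hScomp : IsCompact Sset) (hTcomp : IsCompact Tset)
    (hSpos : ∃ s ∈ Sset, ∀ ℓ, 0 < s ℓ) (hTpos : ∃ t ∈ Tset, ∀ k, 0 < t k) (M : Matrix m n ℝ)
    (hbdd : BddAbove (image2 (fun z w => z ⬝ᵥ M *ᵥ w) (ellitope S Sset) (ellitope T Tset))) :
    sSup (image2 (fun z w => z ⬝ᵥ M *ᵥ w) (ellitope S Sset) (ellitope T Tset)) ∈
      sdpValues S Sset T Tset M := by
  obtain ⟨s₀, hs₀, hs₀pos⟩ := hSpos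
  obtain ⟨t₀, ht₀, ht₀pos⟩ := hTpos
  obtain ⟨s, hs, hsmax⟩ := hScomp.exists_isMaxOn ⟨s₀, hs₀⟩ (continuous_apply default).continuousOn
  obtain ⟨t, ht, htmax⟩ := hTcomp.exists_isMaxOn ⟨t₀, ht₀⟩ (continuous_apply default).continuousOn
  have hσ : 0 < s default := (hs₀pos default).trans_le (isMaxOn_iff.1 hsmax s₀ hs₀)
  have hτ : 0 < t default := (ht₀pos default).trans_le (isMaxOn_iff.1 htmax t₀ ht₀)
  set N := sSup (image2 (fun z w => z ⬝ᵥ M *ᵥ w) (ellitope S Sset) (ellitope T Tset))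
  have hbound : ∀ z w, z ⬝ᵥ S default *ᵥ z ≤ s default → w ⬝ᵥ T default *ᵥ w ≤ t default →
      z ⬝ᵥ M *ᵥ w ≤ N := fun z w hz hw =>
    le_csSup hbdd (mem_image2_of_mem ⟨s, hs, Unique.forall_iff.2 hz⟩
      ⟨t, ht, Unique.forall_iff.2 hw⟩)
  have hN : 0 ≤ N := by simpa using hbound 0 0 (by simpa using hσ.le) (by simpa using hτ.le)
  refine ⟨fun _ => N / (2 * t default), fun _ => N / (2 * s default), fun _ => by positivity,
    fun _ => by positivity, ?_, ?_⟩
  · simp only [Fintype.sum_unique]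
    rw [posSemidef_fromBlocks_half_iff (hS.isHermitian.smul (IsSelfAdjoint.all _))
      (hT.isHermitian.smul (IsSelfAdjoint.all _))]
    intro z w
    have := hS.dotProduct_mulVec_le_of_forall_le hT M hσ hτ hbound z (-w)
    simp only [mulVec_neg, dotProduct_neg, neg_dotProduct, neg_neg] at this
    simp only [smul_mulVec, dotProduct_smul, smul_eq_mul]
    linarith
  · rw [supportFun_const_of_isMaxOn (by positivity) ht htmax,
      supportFun_const_of_isMaxOn (by positivity) hs hsmax]
    field_simp
    ring

end Ellitope

theorem stmt17_general {q p n m K L : ℕ}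
    (Sm : Fin L → Matrix (Fin q) (Fin q) ℝ) (Sset : Set (Fin L → ℝ))
    (Tm : Fin K → Matrix (Fin p) (Fin p) ℝ) (Tset : Set (Fin K → ℝ))
    (hSsum : (∑ ℓ, Sm ℓ).PosDef)
    (hScomp : IsCompact Sset)
    (hSnonneg : ∀ s ∈ Sset, ∀ ℓ, 0 ≤ s ℓ)
    (hSint : (interior Sset).Nonempty)
    (hTsum : (∑ k, Tm k).PosDef)
    (hTcomp : IsCompact Tset)
    (hTnonneg : ∀ t ∈ Tset, ∀ k, 0 ≤ t k)
    (hTint : (interior Tset).Nonempty)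
    (P : Matrix (Fin n) (Fin p) ℝ) (Q : Matrix (Fin m) (Fin q) ℝ)
    (W : Set (Fin p → ℝ)) (hW : W = {w | ∃ t ∈ Tset, ∀ k, w ⬝ᵥ (Tm k) *ᵥ w ≤ t k})
    (Z : Set (Fin q → ℝ)) (hZ : Z = {z | ∃ s ∈ Sset, ∀ ℓ, z ⬝ᵥ (Sm ℓ) *ᵥ z ≤ s ℓ})
    (X : Set (Fin n → ℝ)) (hX : X = (fun w => P *ᵥ w) '' W)
    (Bstar : Set (Fin m → ℝ)) (hBs : Bstar = (fun z => Q *ᵥ z) '' Z)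
    (A : Matrix (Fin m) (Fin n) ℝ)
    (nrm Opt : ℝ)
    (hnrm : nrm = sSup {r | ∃ y ∈ Bstar, ∃ x ∈ X, r = y ⬝ᵥ A *ᵥ x})
    (hOpt : Opt = sInf {r | ∃ (lam : Fin K → ℝ) (ups : Fin L → ℝ),
        (∀ k, 0 ≤ lam k) ∧ (∀ ℓ, 0 ≤ ups ℓ) ∧
        (Matrix.fromBlocks (∑ ℓ, ups ℓ • Sm ℓ) ((1 / 2 : ℝ) • (Qᵀ * A * P))
            ((1 / 2 : ℝ) • (Qᵀ * A * P)ᵀ) (∑ k, lam k • Tm k)).PosSemidef ∧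
        r = sSup {u | ∃ t ∈ Tset, u = ∑ k, lam k * t k}
            + sSup {u | ∃ s ∈ Sset, u = ∑ ℓ, ups ℓ * s ℓ}}) :
    nrm ≤ Opt ∧ (K = 1 → L = 1 → Opt = nrm) := by
  subst hW hZ hX hBs
  rw [setOf_image_dotProduct_mulVec_image] at hnrm
  change Opt = sInf (sdpValues Sm Sset Tm Tset (Qᵀ * A * P)) at hOpt
  set V := image2 (fun z w => z ⬝ᵥ (Qᵀ * A * P) *ᵥ w) (ellitope Sm Sset) (ellitope Tm Tset)
  obtain ⟨s, hs, hspos⟩ := exists_forall_pos_of_interior_nonempty hSnonneg hSint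
  obtain ⟨t, ht, htpos⟩ := exists_forall_pos_of_interior_nonempty hTnonneg hTint
  have h0 : (0 : ℝ) ∈ V := ⟨0, zero_mem_ellitope Sm hs fun ℓ => (hspos ℓ).le, 0,
    zero_mem_ellitope Tm ht fun k => (htpos k).le, by simp⟩
  have hub : sdpValues Sm Sset Tm Tset (Qᵀ * A * P) ⊆ upperBounds V :=
    sdpValues_subset_upperBounds hScomp hTcomp _
  have hne := sdpValues_nonempty Sset Tset hSsum hTsum (Qᵀ * A * P)
  have hle : nrm ≤ Opt := by
    rw [hnrm, hOpt]
    exact le_csInf hne fun r hr => csSup_le ⟨0, h0⟩ (hub hr)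
  refine ⟨hle, fun hK hL => le_antisymm ?_ hle⟩
  subst hK hL
  have hS : (Sm 0).PosDef := by simpa using hSsum
  have hT : (Tm 0).PosDef := by simpa using hTsum
  rw [hOpt, hnrm]
  exact csInf_le ⟨0, fun r hr => hub hr h0⟩ <| sSup_image2_mem_sdpValues hS hT hScomp hTcomp
    ⟨s, hs, hspos⟩ ⟨t, ht, htpos⟩ _ (hne.imp fun _ hr => hub hr)

/-- Main bounding theorem: for ellitopes `X = PW`, `B_* = QZ` (with `B` the polar of `B_*`),
the SDP value `Opt(A)` upper-bounds `‖A‖_{B,X} = max{yᵀAx : y ∈ B_*, x ∈ X}`, and when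
`K = L = 1` the bound is exact. -/
theorem stmt17 {q p n m K L : ℕ}
    (Sm : Fin L → Matrix (Fin q) (Fin q) ℝ) (Sset : Set (Fin L → ℝ))
    (Tm : Fin K → Matrix (Fin p) (Fin p) ℝ) (Tset : Set (Fin K → ℝ))
    (hSsd : ∀ ℓ, (Sm ℓ).PosSemidef) (hSsum : (∑ ℓ, Sm ℓ).PosDef)
    (hSconv : Convex ℝ Sset) (hScomp : IsCompact Sset)
    (hSnonneg : ∀ s ∈ Sset, ∀ ℓ, 0 ≤ s ℓ)
    (hSmono : ∀ s ∈ Sset, ∀ s' : Fin L → ℝ, (∀ ℓ, 0 ≤ s' ℓ) → (∀ ℓ, s' ℓ ≤ s ℓ) → s' ∈ Sset)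
    (hSint : (interior Sset).Nonempty)
    (hTsd : ∀ k, (Tm k).PosSemidef) (hTsum : (∑ k, Tm k).PosDef)
    (hTconv : Convex ℝ Tset) (hTcomp : IsCompact Tset)
    (hTnonneg : ∀ t ∈ Tset, ∀ k, 0 ≤ t k)
    (hTmono : ∀ t ∈ Tset, ∀ t' : Fin K → ℝ, (∀ k, 0 ≤ t' k) → (∀ k, t' k ≤ t k) → t' ∈ Tset)
    (hTint : (interior Tset).Nonempty)
    (P : Matrix (Fin n) (Fin p) ℝ) (Q : Matrix (Fin m) (Fin q) ℝ)
    (W : Set (Fin p → ℝ)) (hW : W = {w | ∃ t ∈ Tset, ∀ k, w ⬝ᵥ (Tm k) *ᵥ w ≤ t k})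
    (Z : Set (Fin q → ℝ)) (hZ : Z = {z | ∃ s ∈ Sset, ∀ ℓ, z ⬝ᵥ (Sm ℓ) *ᵥ z ≤ s ℓ})
    (X : Set (Fin n → ℝ)) (hX : X = (fun w => P *ᵥ w) '' W)
    (hXint : (interior X).Nonempty)
    (Bstar : Set (Fin m → ℝ)) (hBs : Bstar = (fun z => Q *ᵥ z) '' Z)
    (hBsint : (interior Bstar).Nonempty)
    (A : Matrix (Fin m) (Fin n) ℝ)
    (nrm Opt : ℝ)
    (hnrm : nrm = sSup {r | ∃ y ∈ Bstar, ∃ x ∈ X, r = y ⬝ᵥ A *ᵥ x})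
    (hOpt : Opt = sInf {r | ∃ (lam : Fin K → ℝ) (ups : Fin L → ℝ),
        (∀ k, 0 ≤ lam k) ∧ (∀ ℓ, 0 ≤ ups ℓ) ∧
        (Matrix.fromBlocks (∑ ℓ, ups ℓ • Sm ℓ) ((1 / 2 : ℝ) • (Qᵀ * A * P))
            ((1 / 2 : ℝ) • (Qᵀ * A * P)ᵀ) (∑ k, lam k • Tm k)).PosSemidef ∧
        r = sSup {u | ∃ t ∈ Tset, u = ∑ k, lam k * t k}
            + sSup {u | ∃ s ∈ Sset, u = ∑ ℓ, ups ℓ * s ℓ}}) :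
    nrm ≤ Opt ∧ (K = 1 → L = 1 → Opt = nrm) :=
  stmt17_general Sm Sset Tm Tset hSsum hScomp hSnonneg hSint hTsum hTcomp hTnonneg hTint P Q W hW Z
    hZ X hX Bstar hBs A nrm Opt hnrm hOpt
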